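/- arXiv:math/0608098 — 2 statements merged into one kernel-verified Lean document; each statement's English description precedes it below -/
import Mathlib

section
/- (Springer's theorem) Let q be an anisotropic quadratic form over a field k (any characteristic) and L/k a finite field extension of odd degree. Then q remains anisotropic over L. -/
set_option synthInstance.maxHeartbeats 1000000
set_option maxHeartbeats 1000000

open scoped TensorProduct

section SpringerAux
open Polynomial IntermediateField
variable {k : Type*} [Field k] {V : Type*} [AddCommGroup V] [Module k V]

noncomputable def qBC (b : LinearMap.BilinForm k V) (A : Type*) [CommRing A] [Algebra k A] :
    QuadraticForm A (A ⊗[k] V) := (LinearMap.BilinForm.baseChange A b).toQuadraticMap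

lemma qBC_tmul (b : LinearMap.BilinForm k V) (A : Type*) [CommRing A] [Algebra k A]
    (a : A) (v : V) : qBC b A (a ⊗ₜ v) = (a * a) * algebraMap k A (b v v) := by
  simp [qBC, LinearMap.BilinMap.toQuadraticMap_apply, Algebra.smul_def, mul_comm]

theorem quadratic_ext {A : Type*} [CommRing A] [Algebra k A] {N : Type*} [AddCommGroup N]
    [Module A N] (Q₁ Q₂ : QuadraticMap A (A ⊗[k] V) N)
    (h : ∀ (a : A) (v : V), Q₁ (a ⊗ₜ v) = Q₂ (a ⊗ₜ v)) : Q₁ = Q₂ := by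
  set S := Q₁ - Q₂ with hSdef
  have hsub : ∀ x, S x = Q₁ x - Q₂ x := fun x => rfl
  have hpure : ∀ (a : A) (v : V), S (a ⊗ₜ v) = 0 := by
    intro a v; rw [hsub, h, sub_self]
  have hsm : ∀ (a : A) (v : V), (a ⊗ₜ[k] v : A ⊗[k] V) = a • ((1:A) ⊗ₜ v) := by
    intro a v; rw [TensorProduct.smul_tmul']; simp
  have hpolarpure : ∀ (a c : A) (v w : V), QuadraticMap.polar S (a ⊗ₜ v) (c ⊗ₜ w) = 0 := by
    intro a c v w
    rw [hsm a v, hsm c w, QuadraticMap.polar_smul_left, QuadraticMap.polar_smul_right]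
    have : QuadraticMap.polar S ((1:A) ⊗ₜ[k] v) ((1:A) ⊗ₜ[k] w) = 0 := by
      rw [QuadraticMap.polar, ← TensorProduct.tmul_add, hpure, hpure, hpure]
      simp
    rw [this, smul_zero, smul_zero]
  have hpolar1 : ∀ (x : A ⊗[k] V) (c : A) (w : V), QuadraticMap.polar S x (c ⊗ₜ w) = 0 := by
    intro x c w
    induction x using TensorProduct.induction_on with
    | zero => exact QuadraticMap.polar_zero_left _ _
    | tmul a v => exact hpolarpure a c v w
    | add x y hx hy => rw [QuadraticMap.polar_add_left, hx, hy, add_zero]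
  have hpolar : ∀ (x y : A ⊗[k] V), QuadraticMap.polar S x y = 0 := by
    intro x y
    induction y using TensorProduct.induction_on with
    | zero => exact QuadraticMap.polar_zero_right _ _
    | tmul c w => exact hpolar1 x c w
    | add y z hy hz => rw [QuadraticMap.polar_add_right, hy, hz, add_zero]
  have hS : ∀ x, S x = 0 := by
    intro x
    induction x using TensorProduct.induction_on with
    | zero => exact QuadraticMap.map_zero S
    | tmul a v => exact hpure a v
    | add x y hx hy =>
      have := hpolar x y
      rw [QuadraticMap.polar] at this
      rw [hx, hy] at this
      simpa using this
  ext x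
  have := hS x
  rw [hsub, sub_eq_zero] at this
  exact this
theorem coeff_mul_top {p q : k[X]} {d e : ℕ} (hp : p.natDegree ≤ d) (hq : q.natDegree ≤ e) :
    (p * q).coeff (d + e) = p.coeff d * q.coeff e := by
  rw [Polynomial.coeff_mul]
  apply Finset.sum_eq_single (d, e)
  · rintro ⟨a, c⟩ hmem hne
    rw [Finset.HasAntidiagonal.mem_antidiagonal] at hmem
    by_cases ha : a = d
    · exfalso; apply hne; subst ha
      have : c = e := by omega
      rw [this]
    · rcases lt_or_ge d a with hlt | hle
      · rw [Polynomial.coeff_eq_zero_of_natDegree_lt (lt_of_le_of_lt hp hlt), zero_mul]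
      · have hac : a < d := lt_of_le_of_ne hle ha
        have : e < c := by omega
        rw [Polynomial.coeff_eq_zero_of_natDegree_lt (lt_of_le_of_lt hq this), mul_zero]
  · intro hne; exact absurd ((Finset.HasAntidiagonal.mem_antidiagonal (n := d + e)).mpr rfl) hne
theorem qBC_natural (b : LinearMap.BilinForm k V) {A A' : Type*} [CommRing A] [Algebra k A]
    [CommRing A'] [Algebra k A'] (ψ : A →ₐ[k] A') (x : A ⊗[k] V) :
    qBC b A' (TensorProduct.map ψ.toLinearMap LinearMap.id x) = ψ (qBC b A x) := by
  have key : ∀ x y : A ⊗[k] V,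
      (LinearMap.BilinForm.baseChange A' b) (TensorProduct.map ψ.toLinearMap LinearMap.id x)
        (TensorProduct.map ψ.toLinearMap LinearMap.id y)
      = ψ ((LinearMap.BilinForm.baseChange A b) x y) := by
    intro x y
    induction x using TensorProduct.induction_on with
    | zero => simp
    | add x₁ x₂ h₁ h₂ => simp only [map_add, LinearMap.add_apply, h₁, h₂]
    | tmul a v =>
      induction y using TensorProduct.induction_on with
      | zero => simp
      | add y₁ y₂ h₁ h₂ => simp only [map_add, h₁, h₂]
      | tmul c w =>
        simp only [TensorProduct.map_tmul, AlgHom.toLinearMap_apply, LinearMap.id_coe, id_eq,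
          LinearMap.BilinForm.baseChange_tmul]
        rw [Algebra.smul_def, Algebra.smul_def, map_mul, ψ.commutes, map_mul]
  exact key x x

theorem qBC_anisotropic_congr (b : LinearMap.BilinForm k V) {A B : Type*} [CommRing A]
    [Algebra k A] [CommRing B] [Algebra k B] (e : A ≃ₐ[k] B)
    (hA : (qBC b A).Anisotropic) : (qBC b B).Anisotropic := by
  intro y hy
  have h0 : TensorProduct.map (e.symm : B →ₐ[k] A).toLinearMap LinearMap.id y = 0 := by
    apply hA
    rw [qBC_natural, hy, map_zero]
  have h1 : ((e : A →ₐ[k] B).toLinearMap ∘ₗ (e.symm : B →ₐ[k] A).toLinearMap) =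
      LinearMap.id := by ext z; simp
  have : TensorProduct.map (e : A →ₐ[k] B).toLinearMap LinearMap.id
      (TensorProduct.map (e.symm : B →ₐ[k] A).toLinearMap LinearMap.id y) = y := by
    rw [← LinearMap.comp_apply, ← TensorProduct.map_comp, h1, LinearMap.id_comp,
      TensorProduct.map_id, LinearMap.id_apply]
  rw [h0, map_zero] at this
  exact this.symm

theorem qBC_anisotropic_of_finrank_one (b : LinearMap.BilinForm k V)
    (han : b.toQuadraticMap.Anisotropic) (A : Type*) [Field A] [Algebra k A]
    (h1 : Module.finrank k A = 1) : (qBC b A).Anisotropic := by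
  have hbot := Subalgebra.bot_eq_top_of_finrank_eq_one h1
  have hexists : ∀ x : A ⊗[k] V, ∃ v : V, x = (1:A) ⊗ₜ v := by
    intro x
    induction x using TensorProduct.induction_on with
    | zero => exact ⟨0, by simp⟩
    | tmul a v =>
      have : a ∈ (⊥ : Subalgebra k A) := by rw [hbot]; trivial
      obtain ⟨c, rfl⟩ := Algebra.mem_bot.mp this
      exact ⟨c • v, by
        rw [Algebra.algebraMap_eq_smul_one, TensorProduct.smul_tmul]⟩
    | add x y hx hy =>
      obtain ⟨v, rfl⟩ := hx; obtain ⟨w, rfl⟩ := hy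
      exact ⟨v + w, by rw [TensorProduct.tmul_add]⟩
  intro x hx
  obtain ⟨v, rfl⟩ := hexists x
  rw [qBC_tmul, one_mul, one_mul] at hx
  have hv : b v v = 0 := (algebraMap k A).injective (by rw [hx, map_zero])
  have : v = 0 := han v (by rwa [LinearMap.BilinMap.toQuadraticMap_apply])
  rw [this, TensorProduct.tmul_zero]

theorem exists_odd_irreducible_factor :
    ∀ (n : ℕ) (h : k[X]), h.natDegree = n → h ≠ 0 → Odd h.natDegree →
    ∃ p : k[X], Irreducible p ∧ p ∣ h ∧ Odd p.natDegree := by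
  intro n
  induction n using Nat.strong_induction_on with
  | _ n IH =>
    intro h hdeg h0 hodd
    have hnu : ¬ IsUnit h := fun hu => by
      have h2 : h.natDegree = 0 := Polynomial.natDegree_eq_zero_of_isUnit hu
      rw [h2] at hodd; simp at hodd
    obtain ⟨p, hp, hpd⟩ := WfDvdMonoid.exists_irreducible_factor hnu h0
    by_cases hpodd : Odd p.natDegree
    · exact ⟨p, hp, hpd, hpodd⟩
    · obtain ⟨h', rfl⟩ := hpd
      have hp0 : p ≠ 0 := hp.ne_zero
      have hh'0 : h' ≠ 0 := fun h'0 => h0 (by rw [h'0, mul_zero])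
      have hppos : 0 < p.natDegree := hp.natDegree_pos
      have hdeg' : (p * h').natDegree = p.natDegree + h'.natDegree :=
        Polynomial.natDegree_mul hp0 hh'0
      have hlt : h'.natDegree < n := by omega
      have hodd' : Odd h'.natDegree := by
        rw [hdeg'] at hodd
        rcases Nat.even_or_odd h'.natDegree with he' | ho'
        · exfalso
          rcases Nat.even_or_odd p.natDegree with he | ho
          · exact (Nat.not_odd_iff_even.mpr (he.add he')) hodd
          · exact hpodd ho
        · exact ho'
      obtain ⟨p₁, hirr, hdvd, hodd₁⟩ := IH h'.natDegree hlt h' rfl hh'0 hodd'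
      exact ⟨p₁, hirr, hdvd.mul_left p, hodd₁⟩
theorem qBC_adjoinRoot_anisotropic (b : LinearMap.BilinForm k V)
    (han : b.toQuadraticMap.Anisotropic) :
    ∀ (n : ℕ) (f : k[X]), Irreducible f → f.natDegree = n → Odd n →
      (qBC b (AdjoinRoot f)).Anisotropic := by
  intro n
  induction n using Nat.strong_induction_on with
  | _ n IH =>
  intro f hf hfdeg hoddn
  haveI := Fact.mk hf
  intro x hQx
  by_contra hx0
  have hf0 : f ≠ 0 := hf.ne_zero
  have hnpos : 0 < n := Nat.pos_of_ne_zero (by rintro rfl; simp [Nat.odd_iff] at hoddn)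
  classical
  set β : Module.Basis (Module.Free.ChooseBasisIndex k V) k V := Module.Free.chooseBasis k V with hβ
  set bA : Module.Basis _ (AdjoinRoot f) ((AdjoinRoot f) ⊗[k] V) := β.baseChange (AdjoinRoot f) with hbA
  set r := bA.repr x with hr
  set s : Finset _ := r.support with hs
  have hr0 : r ≠ 0 := fun h => hx0 (bA.repr.map_eq_zero_iff.mp h)
  have hsne : s.Nonempty := Finsupp.support_nonempty_iff.mpr hr0
  -- polynomial representatives
  have hmk : ∀ i, ∃ p : k[X], AdjoinRoot.mk f p = r i := fun i => AdjoinRoot.mk_surjective (r i)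
  choose p hp using hmk
  set g0 : _ → k[X] := fun i => p i % f with hg0
  have hmkg0 : ∀ i, AdjoinRoot.mk f (g0 i) = r i := by
    intro i
    rw [← hp i]
    conv_rhs => rw [← EuclideanDomain.div_add_mod (p i) f]
    rw [map_add, map_mul, AdjoinRoot.mk_self, zero_mul, zero_add]
  have hg0ne : ∀ i ∈ s, g0 i ≠ 0 := by
    intro i hi h0
    have : r i = 0 := by rw [← hmkg0 i, h0, map_zero]
    exact (Finsupp.mem_support_iff.mp hi) this
  have hg0deg : ∀ i ∈ s, (g0 i).natDegree < n := by
    intro i hi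
    rw [← hfdeg]
    exact Polynomial.natDegree_lt_natDegree (hg0ne i hi) (EuclideanDomain.mod_lt _ hf0)
  -- gcd normalization
  obtain ⟨g, hge, hgcd1⟩ := Finset.extract_gcd g0 hsne
  set d : k[X] := s.gcd g0 with hd
  have hd0 : d ≠ 0 := by
    intro h0
    obtain ⟨i, hi⟩ := hsne
    exact hg0ne i hi (Finset.gcd_eq_zero_iff.mp h0 i hi)
  have hgne0 : ∀ i ∈ s, g i ≠ 0 := by
    intro i hi h0
    apply hg0ne i hi
    rw [hge i hi, h0, mul_zero]
  have hgdeg : ∀ i ∈ s, (g i).natDegree < n := by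
    intro i hi
    have h1 : (g0 i).natDegree = d.natDegree + (g i).natDegree := by
      rw [hge i hi]; exact Polynomial.natDegree_mul hd0 (hgne0 i hi)
    have := hg0deg i hi
    omega
  -- the polynomial vector and its value
  set x0 : k[X] ⊗[k] V := ∑ i ∈ s, (g i) ⊗ₜ β i with hx0def
  set Φ : k[X] := qBC b k[X] x0 with hΦdef
  set ψ : k[X] →ₐ[k] AdjoinRoot f := Polynomial.aeval (AdjoinRoot.root f) with hψdef
  have hψ : ∀ pp : k[X], ψ pp = AdjoinRoot.mk f pp := fun pp => AdjoinRoot.aeval_eq pp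
  set w : (AdjoinRoot f) ⊗[k] V := TensorProduct.map ψ.toLinearMap LinearMap.id x0 with hwdef
  have hw : w = ∑ i ∈ s, (AdjoinRoot.mk f (g i)) ⊗ₜ β i := by
    rw [hwdef, hx0def, map_sum]
    refine Finset.sum_congr rfl fun i hi => ?_
    rw [TensorProduct.map_tmul]
    simp [hψ]
  -- x = mk d • w
  have hx : x = (AdjoinRoot.mk f d) • w := by
    have h1 : x = ∑ i ∈ s, r i • bA i := by
      conv_lhs => rw [← bA.linearCombination_repr x]
      rw [Finsupp.linearCombination_apply, Finsupp.sum]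
    rw [h1, hw, Finset.smul_sum]
    refine Finset.sum_congr rfl fun i hi => ?_
    rw [hbA, Module.Basis.baseChange_apply, TensorProduct.smul_tmul', TensorProduct.smul_tmul',
      smul_eq_mul, smul_eq_mul, mul_one, ← map_mul, ← hge i hi, hmkg0]
  have hmkd : AdjoinRoot.mk f d ≠ 0 := by
    intro h0
    obtain ⟨i, hi⟩ := hsne
    apply Finsupp.mem_support_iff.mp hi
    rw [← hmkg0 i, hge i hi, map_mul, h0, zero_mul]
  have hQw : qBC b (AdjoinRoot f) w = 0 := by
    have := hQx
    rw [hx, QuadraticMap.map_smul, smul_eq_mul] at this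
    exact (mul_eq_zero.mp this).resolve_left (mul_ne_zero hmkd hmkd)
  -- f ∣ Φ
  have hfΦ : f ∣ Φ := by
    rw [← AdjoinRoot.mk_eq_zero, ← hψ, hΦdef, ← qBC_natural b ψ x0, ← hwdef, hQw]
  -- expansion of Φ
  have hΦ : Φ = ∑ i ∈ s, ∑ j ∈ s, (b (β j)) (β i) • (g j * g i) := by
    rw [hΦdef, hx0def]
    simp only [qBC, LinearMap.BilinMap.toQuadraticMap_apply, map_sum, LinearMap.coe_sum,
      Finset.sum_apply, LinearMap.BilinForm.baseChange_tmul]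
  set D : ℕ := s.sup (fun i => (g i).natDegree) with hD
  have hgD : ∀ i ∈ s, (g i).natDegree ≤ D := by
    intro i hi
    rw [hD]
    exact Finset.le_sup (f := fun i => (g i).natDegree) hi
  set c : _ → k := fun i => (g i).coeff D with hc
  set vtop : V := ∑ i ∈ s, c i • β i with hvtop
  have hcoeff : Φ.coeff (2 * D) = b vtop vtop := by
    rw [hΦ, hvtop]
    rw [Polynomial.finset_sum_coeff]
    have hlhs : ∀ i ∈ s, (∑ j ∈ s, (b (β j)) (β i) • (g j * g i)).coeff (2 * D)
        = ∑ j ∈ s, (b (β j)) (β i) * (c j * c i) := by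
      intro i hi
      rw [Polynomial.finset_sum_coeff]
      refine Finset.sum_congr rfl fun j hj => ?_
      rw [Polynomial.coeff_smul, smul_eq_mul, two_mul, coeff_mul_top (hgD j hj) (hgD i hi)]
    rw [Finset.sum_congr rfl hlhs]
    simp only [map_sum, map_smul, LinearMap.coe_sum, Finset.sum_apply, LinearMap.smul_apply,
      smul_eq_mul]
    refine Finset.sum_congr rfl fun i hi => ?_
    rw [Finset.mul_sum]
    refine Finset.sum_congr rfl fun j hj => ?_
    ring
  obtain ⟨i₀, hi₀s, hi₀⟩ := Finset.exists_mem_eq_sup s hsne (fun i => (g i).natDegree)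
  have hci₀ : c i₀ ≠ 0 := by
    have h1 : (g i₀).coeff ((g i₀).natDegree) ≠ 0 := by
      rw [Polynomial.coeff_natDegree]
      exact Polynomial.leadingCoeff_ne_zero.mpr (hgne0 i₀ hi₀s)
    rw [hc]
    simpa [← hi₀] using h1
  have hvtop0 : vtop ≠ 0 := fun h =>
    hci₀ (linearIndependent_iff'.mp β.linearIndependent s c (by rw [← hvtop]; exact h) i₀ hi₀s)
  have hqv : b vtop vtop ≠ 0 := fun h =>
    hvtop0 (han vtop (by rwa [LinearMap.BilinMap.toQuadraticMap_apply]))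
  have hcoeffne : Φ.coeff (2 * D) ≠ 0 := by rw [hcoeff]; exact hqv
  have hΦ0 : Φ ≠ 0 := fun h => hcoeffne (by rw [h, Polynomial.coeff_zero])
  have hdegle : Φ.natDegree ≤ 2 * D := by
    rw [hΦ]
    apply Polynomial.natDegree_sum_le_of_forall_le
    intro i hi
    apply Polynomial.natDegree_sum_le_of_forall_le
    intro j hj
    refine le_trans (Polynomial.natDegree_smul_le _ _) (le_trans (Polynomial.natDegree_mul_le) ?_)
    have := hgD i hi; have := hgD j hj; omega
  have hdegΦ : Φ.natDegree = 2 * D := le_antisymm hdegle (Polynomial.le_natDegree_of_ne_zero hcoeffne)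
  -- factor h
  set h : k[X] := Φ / f with hhdef
  have hfh : f * h = Φ := EuclideanDomain.mul_div_cancel' hf0 hfΦ
  have hh0 : h ≠ 0 := by
    intro h0; rw [h0, mul_zero] at hfh; exact hΦ0 hfh.symm
  have hdegs : n + h.natDegree = 2 * D := by
    rw [← hdegΦ, ← hfh, Polynomial.natDegree_mul hf0 hh0, hfdeg]
  have hoddh : Odd h.natDegree := by
    have h1 := Nat.odd_iff.mp hoddn
    rw [Nat.odd_iff]; omega
  have hDlt : D < n := by
    rw [hD]
    exact (Finset.sup_lt_iff hnpos).mpr hgdeg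
  have hdhlt : h.natDegree < n := by omega
  obtain ⟨p₁, hp₁irr, hp₁dvd, hp₁odd⟩ := exists_odd_irreducible_factor h.natDegree h rfl hh0 hoddh
  have hp₁ltn : p₁.natDegree < n :=
    lt_of_le_of_lt (Polynomial.natDegree_le_of_dvd hp₁dvd hh0) hdhlt
  have hanis' := IH p₁.natDegree hp₁ltn p₁ hp₁irr rfl hp₁odd
  haveI := Fact.mk hp₁irr
  set ψ' : k[X] →ₐ[k] AdjoinRoot p₁ := Polynomial.aeval (AdjoinRoot.root p₁) with hψ'def
  have hψ' : ∀ pp : k[X], ψ' pp = AdjoinRoot.mk p₁ pp := fun pp => AdjoinRoot.aeval_eq pp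
  set y : (AdjoinRoot p₁) ⊗[k] V := TensorProduct.map ψ'.toLinearMap LinearMap.id x0 with hydef
  have hp₁Φ : p₁ ∣ Φ := hp₁dvd.trans (Dvd.intro_left f hfh)
  have hQy : qBC b (AdjoinRoot p₁) y = 0 := by
    rw [hydef, qBC_natural b ψ' x0, ← hΦdef, hψ', AdjoinRoot.mk_eq_zero.mpr hp₁Φ]
  have hy0 : y = 0 := hanis' y hQy
  have hy : y = ∑ i ∈ s, (AdjoinRoot.mk p₁ (g i)) • ((β.baseChange (AdjoinRoot p₁)) i) := by
    rw [hydef, hx0def, map_sum]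
    refine Finset.sum_congr rfl fun i hi => ?_
    rw [TensorProduct.map_tmul, Module.Basis.baseChange_apply, TensorProduct.smul_tmul', smul_eq_mul,
      mul_one]
    simp [hψ']
  have hall : ∀ i ∈ s, AdjoinRoot.mk p₁ (g i) = 0 := by
    intro i hi
    exact linearIndependent_iff'.mp (β.baseChange (AdjoinRoot p₁)).linearIndependent s _
      (by rw [← hy, hy0]) i hi
  have hdvdall : ∀ i ∈ s, p₁ ∣ g i := fun i hi => AdjoinRoot.mk_eq_zero.mp (hall i hi)
  have : p₁ ∣ (1 : k[X]) := hgcd1 ▸ Finset.dvd_gcd hdvdall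
  exact hp₁irr.not_isUnit (isUnit_of_dvd_one this)
theorem qBC_adjoin_anisotropic {E : Type*} [Field E] [Algebra k E]
    (b : LinearMap.BilinForm k V) (han : b.toQuadraticMap.Anisotropic) (x : E)
    (hint : IsIntegral k x) (hodd : Odd (minpoly k x).natDegree) :
    (qBC b k⟮x⟯).Anisotropic :=
  qBC_anisotropic_congr b (IntermediateField.adjoinRootEquivAdjoin k hint)
    (qBC_adjoinRoot_anisotropic b han (minpoly k x).natDegree (minpoly k x)
      (minpoly.irreducible hint) rfl hodd)

theorem qBC_trans_anisotropic {S T : Type*} [Field S] [Algebra k S] [CommRing T] [Algebra k T]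
    [Algebra S T] [IsScalarTower k S T] (b : LinearMap.BilinForm k V)
    (h : (qBC (LinearMap.BilinForm.baseChange S b) T).Anisotropic) :
    (qBC b T).Anisotropic := by
  set e := TensorProduct.AlgebraTensorModule.cancelBaseChange k S T T V with he
  have hQ2 : (qBC (LinearMap.BilinForm.baseChange S b) T).comp e.symm.toLinearMap = qBC b T := by
    apply quadratic_ext
    intro a v
    simp only [QuadraticMap.comp_apply, LinearEquiv.coe_coe]
    rw [qBC_tmul]
    have h1 : e.symm (a ⊗ₜ[k] v) = a ⊗ₜ[S] ((1:S) ⊗ₜ[k] v) :=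
      TensorProduct.AlgebraTensorModule.cancelBaseChange_symm_tmul k S T a v
    rw [h1, qBC_tmul]
    have h2 : (LinearMap.BilinForm.baseChange S b) ((1:S) ⊗ₜ[k] v) ((1:S) ⊗ₜ[k] v)
        = algebraMap k S (b v v) := by
      rw [LinearMap.BilinForm.baseChange_tmul, mul_one, Algebra.smul_def, mul_one]
    rw [h2, ← IsScalarTower.algebraMap_apply]
  intro y hy
  apply e.symm.map_eq_zero_iff.mp
  apply h
  have h4 : (qBC (LinearMap.BilinForm.baseChange S b) T).comp e.symm.toLinearMap y = 0 := by
    rw [hQ2]; exact hy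
  simpa only [QuadraticMap.comp_apply, LinearEquiv.coe_coe] using h4

theorem qBC_anisotropic_of_odd (b : LinearMap.BilinForm k V)
    (han : b.toQuadraticMap.Anisotropic) (L : Type*) [Field L] [Algebra k L]
    [FiniteDimensional k L] (hodd : Odd (Module.finrank k L)) : (qBC b L).Anisotropic := by
  have key : ∀ S : IntermediateField k L, (qBC b S).Anisotropic := by
    intro S
    induction S using IntermediateField.induction_on_adjoin with
    | base => exact qBC_anisotropic_of_finrank_one b han _ IntermediateField.finrank_bot
    | ih S x hS =>
      haveI : FiniteDimensional S L := FiniteDimensional.right k S L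
      have hint : IsIntegral S x := IsIntegral.of_finite S x
      have hoddSL : Odd (Module.finrank S L) := by
        have hmul : Module.finrank k S * Module.finrank S L = Module.finrank k L :=
          Module.finrank_mul_finrank k S L
        rw [← hmul] at hodd
        exact (Nat.odd_mul.mp hodd).2
    
      have hdvd : (minpoly S x).natDegree ∣ Module.finrank S L := by
        rw [← IntermediateField.adjoin.finrank hint]
        exact ⟨Module.finrank S⟮x⟯ L, (Module.finrank_mul_finrank S S⟮x⟯ L).symm⟩
      have hoddm : Odd (minpoly S x).natDegree := by
        obtain ⟨c, hc⟩ := hdvd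
        rw [hc] at hoddSL
        exact (Nat.odd_mul.mp hoddSL).1
      have hanS : (LinearMap.BilinForm.baseChange S b).toQuadraticMap.Anisotropic := hS
      have hadj : (qBC (LinearMap.BilinForm.baseChange S b) S⟮x⟯).Anisotropic :=
        qBC_adjoin_anisotropic (LinearMap.BilinForm.baseChange S b) hanS x hint hoddm
      have hT : (qBC b S⟮x⟯).Anisotropic := qBC_trans_anisotropic b hadj
      have ealg : S⟮x⟯ ≃ₐ[k] (S⟮x⟯.restrictScalars k) :=
        { toFun := fun y => ⟨y.1, (IntermediateField.mem_restrictScalars k).mpr y.2⟩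
          invFun := fun y => ⟨y.1, (IntermediateField.mem_restrictScalars k).mp y.2⟩
          left_inv := fun y => rfl
          right_inv := fun y => rfl
          map_mul' := fun _ _ => rfl
          map_add' := fun _ _ => rfl
          commutes' := fun c => rfl }
      exact qBC_anisotropic_congr b ealg hT
  exact qBC_anisotropic_congr b IntermediateField.topEquiv (key ⊤)

end SpringerAux

/-- **Springer's theorem.** Let `q` be an anisotropic quadratic form
over a field `k` (any characteristic) and `L/k` a finite field extension of odd
degree.  Then `q` remains anisotropic over `L`.  The extension `q_L` of `q` to
`L ⊗[k] V` is characterized by its values `q_L (1 ⊗ v) = q v` on pure tensors. -/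
theorem springer_odd_degree
    (k L V : Type*) [Field k] [Field L] [Algebra k L] [FiniteDimensional k L]
    (hodd : Odd (Module.finrank k L))
    [AddCommGroup V] [Module k V]
    (q : QuadraticForm k V) (han : q.Anisotropic)
    (Q : QuadraticForm L (L ⊗[k] V))
    (hQ : ∀ v : V, Q ((1 : L) ⊗ₜ[k] v) = algebraMap k L (q v)) :
    Q.Anisotropic := by
  obtain ⟨b, hb⟩ := LinearMap.BilinMap.toQuadraticMap_surjective q
  have han' : b.toQuadraticMap.Anisotropic := by rw [hb]; exact han
  have hL := qBC_anisotropic_of_odd b han' L hodd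
  have hbv : ∀ v : V, b v v = q v := by
    intro v
    rw [← hb, LinearMap.BilinMap.toQuadraticMap_apply]
  have hQeq : Q = qBC b L := by
    apply quadratic_ext
    intro a v
    have h1 : (a ⊗ₜ[k] v : L ⊗[k] V) = a • ((1:L) ⊗ₜ v) := by
      rw [TensorProduct.smul_tmul']; simp
    rw [h1, QuadraticMap.map_smul, QuadraticMap.map_smul, hQ, qBC_tmul, hbv, one_mul, one_mul]
  rw [hQeq]
  exact hL
end

section
/- Let Q be an isotropic projective quadric over a field k of dimension greater than 0, which is not a union of two hyperplanes, with a rational point p. Then every k-rational point of Q is rationally equivalent to p in the Chow group CH₀(Q); consequently for such Q the degree map CH₀(Q) → Z is injective on the subgroup generated by k-points. -/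
open QuadraticMap

variable {k V : Type*} [Field k] [AddCommGroup V] [Module k V]

/-- The line through `u, v` (linearly independent) meets the quadric `{q = 0}` in the
zero-cycle `x + y`: the binary form `(s, t) ↦ q (s • u + t • v)` factors, with a
nonzero constant, into the two linear forms vanishing at `x` and `y`. -/
def IsLineSection (q : QuadraticForm k V) (u v x y : V) : Prop :=
  LinearIndependent k ![u, v] ∧
  ∃ a₁ b₁ a₂ b₂ c : k, c ≠ 0 ∧
    x = a₁ • u + b₁ • v ∧ y = a₂ • u + b₂ • v ∧
    ∀ s t : k, q (s • u + t • v) = c * (b₁ * s - a₁ * t) * (b₂ * s - a₂ * t)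

/-- Generators of rational equivalence of zero-cycles on the quadric `{q = 0}`:
(i) `[x] − [y]` for `x, y` spanning a line contained in the quadric;
(ii) `([x] + [y]) − ([z] + [w])` whenever `x + y` and `z + w` are the intersection
cycles of the quadric with two lines not contained in it (any two such line sections
are rationally equivalent, both being pullbacks of the class of a line in
`CH₁(ℙ^{n+1})`). -/
def ratEquivGenerators (q : QuadraticForm k V) :
    Set (Projectivization k V →₀ ℤ) :=
  {z | ∃ (u v : V) (hu : u ≠ 0) (hv : v ≠ 0),
      (∀ s t : k, q (s • u + t • v) = 0) ∧
      z = Finsupp.single (Projectivization.mk k u hu) 1 -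
          Finsupp.single (Projectivization.mk k v hv) 1} ∪
  {z | ∃ (u v x y u' v' x' y' : V) (hx : x ≠ 0) (hy : y ≠ 0) (hx' : x' ≠ 0)
      (hy' : y' ≠ 0),
      IsLineSection q u v x y ∧ IsLineSection q u' v' x' y' ∧
      z = (Finsupp.single (Projectivization.mk k x hx) 1 +
           Finsupp.single (Projectivization.mk k y hy) 1) -
          (Finsupp.single (Projectivization.mk k x' hx') 1 +
           Finsupp.single (Projectivization.mk k y' hy') 1)}


theorem qexpand (q : QuadraticForm k V) (s t : k) (u v : V) :
    q (s • u + t • v) = s*s*q u + s*t*polar q u v + t*t*q v := by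
  have h : q (s•u + t•v) = q (s•u) + q (t•v) + polar q (s•u) (t•v) := by
    rw [polar]; ring
  rw [h, polar_smul_left, polar_smul_right, QuadraticMap.map_smul, QuadraticMap.map_smul]
  simp only [smul_eq_mul]; ring

theorem exists_tangent (q : QuadraticForm k V)
    (hnothyp : ¬∃ f g : V →ₗ[k] k, ∀ x, q x = f x * g x) (p : V) :
    ∃ v, polar q p v = 0 ∧ q v ≠ 0 := by
  by_contra hcon
  push_neg at hcon
  apply hnothyp
  by_cases he : ∃ e, polar q p e ≠ 0
  · obtain ⟨e, hce⟩ := he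
    refine ⟨(polar q p e)⁻¹ • (polarBilin q p),
      (polarBilin q).flip e - q e • ((polar q p e)⁻¹ • (polarBilin q p)), fun x => ?_⟩
    set c := polar q p e with hc
    set a := c⁻¹ * polar q p x with ha
    have hh : polar q p (x - a • e) = 0 := by
      rw [polar_sub_right, polar_smul_right, ha]
      simp only [smul_eq_mul, ← hc]
      rw [mul_comm c⁻¹, mul_assoc, inv_mul_cancel₀ hce, mul_one, sub_self]
    have hq0 : q (x - a • e) = 0 := hcon _ hh
    have e1 : x = (1:k) • (x - a•e) + a • e := by simp
    have key : q x = a * polar q (x - a•e) e + a*a*q e := by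
      conv_lhs => rw [e1]
      rw [qexpand, hq0]; ring
    have hps : polar q (x - a•e) e = polar q x e - a * (2 * q e) := by
      rw [polar_sub_left, polar_smul_left, polar_self]; simp [smul_eq_mul]
    have hfx : ((polar q p e)⁻¹ • (polarBilin q p)) x = a := by
      simp [ha, hc, polarBilin_apply_apply, mul_comm]
    simp only [LinearMap.sub_apply, LinearMap.smul_apply, LinearMap.flip_apply,
      polarBilin_apply_apply, smul_eq_mul, hfx]
    rw [key, hps]; ring
  · push_neg at he
    exact ⟨0, 0, fun x => by simp [hcon x (he x)]⟩

/-- Let `Q` be an isotropic projective quadric over a field `k` of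
dimension greater than 0 (here `Q ⊆ ℙ^{n+2}` is given by a form `q` on `k^{n+3}`, so
`dim Q = n + 1 > 0`), which is not a union of two hyperplanes, with a rational point
`p`.  Then every `k`-rational point of `Q` is rationally equivalent to `p` in
`CH₀(Q)`; consequently the degree map `CH₀(Q) → ℤ` is injective on the subgroup
generated by the `k`-points: every zero-cycle supported on `k`-points of `Q` of
degree 0 is rationally equivalent to 0. -/
theorem kpoints_rationally_equivalent
    (k : Type*) [Field k] (n : ℕ)
    (q : QuadraticForm k (Fin (n + 3) → k))
    (hnothyp : ¬∃ f g : (Fin (n + 3) → k) →ₗ[k] k, ∀ x, q x = f x * g x)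
    (p : Fin (n + 3) → k) (hp : p ≠ 0) (hqp : q p = 0) :
    (∀ (x : Fin (n + 3) → k) (hx : x ≠ 0), q x = 0 →
      Finsupp.single (Projectivization.mk k x hx) (1 : ℤ) -
        Finsupp.single (Projectivization.mk k p hp) 1 ∈
        AddSubgroup.closure (ratEquivGenerators q)) ∧
    ∀ α : Projectivization k (Fin (n + 3) → k) →₀ ℤ,
      (∀ P ∈ α.support, q P.rep = 0) → (α.sum fun _ m => m) = 0 →
      α ∈ AddSubgroup.closure (ratEquivGenerators q) := by
  have key : ∀ (x : Fin (n + 3) → k) (hx : x ≠ 0), q x = 0 →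
      Finsupp.single (Projectivization.mk k x hx) (1 : ℤ) -
        Finsupp.single (Projectivization.mk k p hp) 1 ∈
        AddSubgroup.closure (ratEquivGenerators q) := by
    intro x hx hqx
    by_cases hmk : Projectivization.mk k x hx = Projectivization.mk k p hp
    · rw [hmk, sub_self]; exact (AddSubgroup.closure _).zero_mem
    · have hind : LinearIndependent k ![x, p] := by
        rw [linearIndependent_fin2]
        refine ⟨hp, fun a haa => ?_⟩
        rcases eq_or_ne a 0 with rfl | h0
        · simp at haa; exact hx haa.symm
        · exact hmk ((Projectivization.mk_eq_mk_iff k x p hx hp).mpr ⟨Units.mk0 a h0, haa⟩)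
      by_cases hpol : polar q x p = 0
      · apply AddSubgroup.subset_closure
        left
        exact ⟨x, p, hx, hp, fun s t => by rw [qexpand, hqx, hqp, hpol]; ring, rfl⟩
      · obtain ⟨v, hv0, hvq⟩ := exists_tangent q hnothyp p
        have hvne : v ≠ 0 := fun h => hvq (by simp [h])
        have hindpv : LinearIndependent k ![p, v] := by
          rw [linearIndependent_fin2]
          refine ⟨hvne, fun a hav => ?_⟩
          have hav' : a • v = p := hav
          have hq2 : q p = a * a * q v := by
            rw [← hav', QuadraticMap.map_smul, smul_eq_mul]
          rw [hqp] at hq2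
          rcases mul_eq_zero.mp hq2.symm with h | h
          · have ha0 : a = 0 := by rcases mul_eq_zero.mp h with h | h <;> exact h
            exact hp (by rw [← hav', ha0, zero_smul])
          · exact hvq h
        have Ls : IsLineSection q x p x p :=
          ⟨hind, 1, 0, 0, 1, -(polar q x p), neg_ne_zero.mpr hpol, by simp, by simp,
            fun s t => by rw [qexpand, hqx, hqp]; ring⟩
        have Lt : IsLineSection q p v p p :=
          ⟨hindpv, 1, 0, 1, 0, q v, hvq, by simp, by simp,
            fun s t => by rw [qexpand, hqp, hv0]; ring⟩
        have hg : ((Finsupp.single (Projectivization.mk k x hx) 1 +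
              Finsupp.single (Projectivization.mk k p hp) 1) -
              (Finsupp.single (Projectivization.mk k p hp) 1 +
              Finsupp.single (Projectivization.mk k p hp) (1 : ℤ))) ∈
            AddSubgroup.closure (ratEquivGenerators q) :=
          AddSubgroup.subset_closure
            (Or.inr ⟨x, p, x, p, p, v, p, p, hx, hp, hp, hp, Ls, Lt, rfl⟩)
        have heq : Finsupp.single (Projectivization.mk k x hx) (1 : ℤ) -
            Finsupp.single (Projectivization.mk k p hp) 1 =
            (Finsupp.single (Projectivization.mk k x hx) 1 +
              Finsupp.single (Projectivization.mk k p hp) 1) -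
              (Finsupp.single (Projectivization.mk k p hp) 1 +
              Finsupp.single (Projectivization.mk k p hp) (1 : ℤ)) := by abel
        rw [heq]; exact hg
  refine ⟨key, fun α hsupp hdeg => ?_⟩
  have hrepr : α = ∑ P ∈ α.support,
      (α P) • (Finsupp.single P (1 : ℤ) -
        Finsupp.single (Projectivization.mk k p hp) 1) := by
    simp only [smul_sub, Finsupp.smul_single, smul_eq_mul, mul_one]
    rw [Finset.sum_sub_distrib]
    have h1 : ∑ P ∈ α.support, Finsupp.single P (α P) = α := Finsupp.sum_single α
    have h2 : ∑ P ∈ α.support,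
        Finsupp.single (Projectivization.mk k p hp) (α P) = 0 := by
      have h2' := map_sum (Finsupp.singleAddHom (Projectivization.mk k p hp))
        (fun P => α P) α.support
      simp only [Finsupp.singleAddHom_apply] at h2'
      have hdeg' : (∑ P ∈ α.support, α P) = 0 := hdeg
      rw [← h2', hdeg', Finsupp.single_zero]
    rw [h1, h2, sub_zero]
  rw [hrepr]
  refine AddSubgroup.sum_mem _ fun P hP => AddSubgroup.zsmul_mem _ ?_ _
  have h1 := key P.rep (Projectivization.rep_nonzero P) (hsupp P hP)
  rwa [Projectivization.mk_rep] at h1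
end
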